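/- arXiv:1012.3100 — 4 statements merged into one kernel-verified Lean document; each statement's English description precedes it below -/
import Mathlib

section
/- (Soundness, sequence case.) Suppose correspondence is preserved by the rules generated by Φ(S₁, nᵢ, n_k, p, R) and by Φ(S₂, n_k, nⱼ, p, R) (induction hypotheses): whenever an initial operational configuration corresponds to the initial pushdown state, the final operational configuration of S₁ (respectively S₂) corresponds to the final pushdown state of the corresponding pushdown execution. Then correspondence is preserved by Φ(S₁;S₂, nᵢ, nⱼ, p, R): if (μ₀,λ₀) with procedure p topmost corresponds to ⟨ρ₀,θ₀⟩, (μ₀,λ₀,S₁) ⇓ (μ₁',λ₁'), (μ₁',λ₁',S₂) ⇓ (μ₂',λ₂') (rule SEQUENCE), and the pushdown execution from ⟨ρ₀,θ₀⟩ at nᵢ through n_k to nⱼ reaches ⟨ρ',θ'⟩, then (μ₂',λ₂') corresponds to ⟨ρ',θ'⟩. -/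
/-!
STATEMENT 8 (Soundness, sequence case).  Setup as in the other soundness
cases.  `Op₁`/`Op₂` are the big-step operational relations of S₁ and S₂ on
configurations (μ,λ), and `Pd₁`/`Pd₂` are the execution relations induced
on pushdown states (ρ, η(p)) by the rule sets Φ(S₁,nᵢ,n_k,p,R) and
Φ(S₂,n_k,nⱼ,p,R) (from the entry point to the exit point of each
statement).  `Preserves` expresses the correspondence-preservation
induction hypothesis: whenever an initial operational configuration
corresponds to the initial pushdown state, the final operational
configuration corresponds to the final pushdown state of the corresponding
pushdown execution.

Conclusion: correspondence is preserved by Φ(S₁;S₂,nᵢ,nⱼ,p,R), whose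
operational relation is the composition of Op₁ and Op₂ (rule SEQUENCE) and
whose pushdown execution from nᵢ through n_k to nⱼ is the composition of
Pd₁ and Pd₂.
-/

abbrev Loc := ℕ
abbrev Val := ℤ
abbrev Var := String

/-- Operational configurations: a heap and a stack. -/
abbrev Cfg := (Loc → Option Val) × (Loc → Option Val)

/-- Pushdown states: a global valuation and a valuation of the local
variables of the topmost procedure. -/
abbrev PdState := (Loc → Val) × (Var → Val)

/-- Correspondence between an operational configuration (μ,λ) (with
procedure p topmost) and a pushdown state (ρ, η(p)), relative to the
location/local-variable correspondence `G`. -/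
def Corresponds (G : Loc → Option Var) (c : Cfg) (s : PdState) : Prop :=
  (∀ l, (c.1 l).isSome → c.1 l = some (s.1 l)) ∧
  (∀ l x, (c.2 l).isSome → G l = some x → c.2 l = some (s.2 x))

/-- Correspondence preservation: if the initial operational configuration
corresponds to the initial pushdown state, then the final operational
configuration corresponds to the final pushdown state of the corresponding
pushdown execution. -/
def Preserves (G : Loc → Option Var) (Op : Cfg → Cfg → Prop)
    (Pd : PdState → PdState → Prop) : Prop :=
  ∀ c s c' s', Corresponds G c s → Op c c' → Pd s s' → Corresponds G c' s'

theorem soundness_seq (G : Loc → Option Var)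
    (Op₁ Op₂ : Cfg → Cfg → Prop) (Pd₁ Pd₂ : PdState → PdState → Prop)
    (h₁ : Preserves G Op₁ Pd₁) (h₂ : Preserves G Op₂ Pd₂) :
    Preserves G (Relation.Comp Op₁ Op₂) (Relation.Comp Pd₁ Pd₂) := by
  rintro c s c' s' hcorr ⟨cmid, hop₁, hop₂⟩ ⟨smid, hpd₁, hpd₂⟩
  exact h₂ cmid smid c' s' (h₁ c s cmid smid hcorr hop₁ hpd₁) hop₂ hpd₂
end

section
/- (Soundness, loop case.) Suppose correspondence is preserved by the rules generated by Φ(S, n_q, nᵢ, p, R ∪ {e}) for the loop body (induction hypothesis). Then correspondence is preserved by Φ(while e do S, nᵢ, nⱼ, p, R): if (μ₀,λ₀) with procedure p topmost corresponds to ⟨ρ₀,θ₀⟩ and (μ₀,λ₀,e) ⇓ false, the rule guarded by !e moves control from nᵢ to nⱼ with unchanged state, matching rule WHILE-F (μ' = μ₀, λ' = λ₀, ρ' = ρ₀, η'(p) = η₀(p)), so correspondence holds at nⱼ; if (μ₀,λ₀,e) ⇓ true, the rule guarded by e moves control to the body entry n_q with unchanged state, the body execution preserves correspondence back at nᵢ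 (by the induction hypothesis), and, by induction on the big-step derivation of WHILE-T, the final configuration (μ'',λ'') corresponds to the final pushdown state at nⱼ. -/
/-- Execution of a while loop with guard evaluation `guard` and body
execution `body`: either the guard is false and the state is unchanged, or
the guard is true, the body executes once, and the loop repeats. -/
inductive WhileRel {α : Type*} (guard : α → Bool → Prop)
    (body : α → α → Prop) : α → α → Prop where
  | whileFalse {a : α} : guard a false → WhileRel guard body a a
  | whileTrue {a b c : α} : guard a true → body a b →
      WhileRel guard body b c → WhileRel guard body a c

/-!
Induct on the operational derivation and invert the pushdown one: related states evaluate the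
guard to the same boolean, so both derivations take the same rule at every step. Either both exit
with unchanged state, or both run the body, which preserves the relation, and continue.
-/

namespace WhileRel

variable {α β : Type*} {R : α → β → Prop} {guard₁ : α → Bool → Prop} {guard₂ : β → Bool → Prop}
  {body₁ : α → α → Prop} {body₂ : β → β → Prop}

theorem preserves_rel
    (hguard : ∀ a s b b', R a s → guard₁ a b → guard₂ s b' → b = b')
    (hbody : ∀ a s a' s', R a s → body₁ a a' → body₂ s s' → R a' s')
    {a a' : α} {s s' : β} (hop : WhileRel guard₁ body₁ a a') (hpd : WhileRel guard₂ body₂ s s')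
    (hrel : R a s) : R a' s' := by
  induction hop generalizing s s' with
  | whileFalse hfalse =>
    cases hpd with
    | whileFalse _ => exact hrel
    | whileTrue htrue _ _ => nomatch hguard _ _ _ _ hrel hfalse htrue
  | whileTrue htrue hstep _ ih =>
    cases hpd with
    | whileFalse hfalse => nomatch hguard _ _ _ _ hrel htrue hfalse
    | whileTrue _ hstep' hrest => exact ih hrest (hbody _ _ _ _ hrel hstep hstep')

end WhileRel

theorem soundness_loop (G : Loc → Option Var)
    (eval : Cfg → Bool → Prop) (pdEval : PdState → Bool → Prop)
    (OpS : Cfg → Cfg → Prop) (PdS : PdState → PdState → Prop)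
    -- operational guard evaluation is deterministic
    (hevalDet : ∀ c b b', eval c b → eval c b' → b = b')
    -- under correspondence, the operational evaluation of the guard and the
    -- guard conditions e / !e of the generated pushdown rules agree
    (hguard : ∀ c s b, Corresponds G c s → (eval c b ↔ pdEval s b))
    -- induction hypothesis for the body rules Φ(S,n_q,nᵢ,p,R∪{e})
    (hbody : Preserves G OpS PdS) :
    Preserves G (WhileRel eval OpS) (WhileRel pdEval PdS) :=
  fun _ _ _ _ hcs hop hpd =>
    WhileRel.preserves_rel
      (fun c s _ _ hrel hb hb' => hevalDet c _ _ hb ((hguard c s _ hrel).mpr hb'))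
      hbody hop hpd hcs
end

section
/- (Soundness, letvar case.) Suppose correspondence is preserved by the rules generated by Φ(S, n_k, nⱼ, p, R) for the body (induction hypothesis). Then correspondence is preserved by Φ(letvar x := e in S, nᵢ, nⱼ, p, R): if (μ₀,λ₀) with procedure p topmost corresponds to ⟨ρ₀,θ₀⟩, the operational rule BINDVAR allocates a fresh location l₀ ∉ dom(μ₀) ∪ dom(λ₀) with λ₁ = λ₀ ⊎ [l₀ := v] where (μ₀,λ₀,e) ⇓ v, executes [l₀/x]S, and deallocates l₀, while the P-BINDVAR rule extends η(p) with x := e and moves control to the body entry n_k; then the configuration (μ₁,λ₁) after binding corresponds to the extended pushdown state, and the final configuration (μ', λ' = λ₂ \ {l₀}) after deallocation corresponds to the final pushdown state ⟨ρ',θ'⟩ at nⱼ. -/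
namespace Corresponds

variable {G : Loc → Option Var} {μ lam : Loc → Option Val}

theorem update_local {ρ : Loc → Val} {η : Var → Val} {x : Var} {l₀ : Loc}
    (h : Corresponds G (μ, lam) (ρ, η)) (hx : ∀ l, G l = some x → l = l₀)
    (hGl₀ : G l₀ = some x) (v : Val) :
    Corresponds G (μ, Function.update lam l₀ (some v)) (ρ, Function.update η x v) := by
  refine ⟨h.1, fun l y hl hG => ?_⟩
  by_cases hl₀ : l = l₀
  · subst hl₀
    obtain rfl : y = x := Option.some_injective _ (hG.symm.trans hGl₀)
    simp
  · have hy : y ≠ x := fun hyx => hl₀ (hx l (hyx ▸ hG))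
    simp only [Function.update_of_ne hl₀, Function.update_of_ne hy] at hl ⊢
    exact h.2 l y hl hG

theorem erase_local {s : PdState} (h : Corresponds G (μ, lam) s) (l₀ : Loc) :
    Corresponds G (μ, fun l => if l = l₀ then none else lam l) s := by
  refine ⟨h.1, fun l y hl hG => ?_⟩
  by_cases hl₀ : l = l₀
  · simp [hl₀] at hl
  · simp only [if_neg hl₀] at hl ⊢
    exact h.2 l y hl hG

end Corresponds

theorem soundness_bindvar_general (G : Loc → Option Var)
    (hGinj : ∀ l₁ l₂ x, G l₁ = some x → G l₂ = some x → l₁ = l₂)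
    (x : Var) (l₀ : Loc) (v : Val)
    (μ₀ lam₀ lam₁ μ₂ lam₂ μ' lam' : Loc → Option Val)
    (ρ₀ ρ₂ ρ' : Loc → Val) (η₀ η₁ η₂ η' : Var → Val)
    (OpS : Cfg → Cfg → Prop) (PdS : PdState → PdState → Prop)
    -- induction hypothesis for the body rules Φ(S,n_k,nⱼ,p,R)
    (hIH : Preserves G OpS PdS)
    (hcorr : Corresponds G (μ₀, lam₀) (ρ₀, η₀))
    -- the fresh location l₀ corresponds to the letvar-bound variable x
    (hGl₀ : G l₀ = some x)
    -- BINDVAR: λ₁ = λ₀ ⊎ [l₀ := v], with (μ₀,λ₀,e) ⇓ v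
    (hbind : lam₁ = Function.update lam₀ l₀ (some v))
    -- P-BINDVAR: η₁ = η₀[x := e]
    (hpbind : η₁ = Function.update η₀ x v)
    -- body executions: (μ₀,λ₁,[l₀/x]S) ⇓ (μ₂,λ₂) and (ρ₀,η₁) → (ρ₂,η₂)
    (hOp : OpS (μ₀, lam₁) (μ₂, lam₂)) (hPd : PdS (ρ₀, η₁) (ρ₂, η₂))
    -- deallocation: μ' = μ₂, λ' = λ₂ \ {l₀}
    (hμ' : μ' = μ₂) (hdealloc : lam' = fun l => if l = l₀ then none else lam₂ l)
    -- final pushdown state at nⱼ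
    (hρ' : ρ' = ρ₂) (hη' : η' = η₂) :
    Corresponds G (μ₀, lam₁) (ρ₀, η₁) ∧
    Corresponds G (μ', lam') (ρ', η') := by
  subst hbind hpbind hμ' hdealloc hρ' hη'
  have hbound := hcorr.update_local (fun l hl => hGinj l l₀ x hl hGl₀) hGl₀ v
  exact ⟨hbound, (hIH _ _ _ _ hbound hOp hPd).erase_local l₀⟩

theorem soundness_bindvar (G : Loc → Option Var)
    (hGinj : ∀ l₁ l₂ x, G l₁ = some x → G l₂ = some x → l₁ = l₂)
    (x : Var) (l₀ : Loc) (v : Val)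
    (μ₀ lam₀ lam₁ μ₂ lam₂ μ' lam' : Loc → Option Val)
    (ρ₀ ρ₂ ρ' : Loc → Val) (η₀ η₁ η₂ η' : Var → Val)
    (OpS : Cfg → Cfg → Prop) (PdS : PdState → PdState → Prop)
    -- induction hypothesis for the body rules Φ(S,n_k,nⱼ,p,R)
    (hIH : Preserves G OpS PdS)
    (hcorr : Corresponds G (μ₀, lam₀) (ρ₀, η₀))
    -- l₀ is fresh: l₀ ∉ dom(μ₀) and l₀ ∉ dom(λ₀)
    (hfreshμ : μ₀ l₀ = none) (hfreshlam : lam₀ l₀ = none)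
    -- the fresh location l₀ corresponds to the letvar-bound variable x
    (hGl₀ : G l₀ = some x)
    -- BINDVAR: λ₁ = λ₀ ⊎ [l₀ := v], with (μ₀,λ₀,e) ⇓ v
    (hbind : lam₁ = Function.update lam₀ l₀ (some v))
    -- P-BINDVAR: η₁ = η₀[x := e]
    (hpbind : η₁ = Function.update η₀ x v)
    -- body executions: (μ₀,λ₁,[l₀/x]S) ⇓ (μ₂,λ₂) and (ρ₀,η₁) → (ρ₂,η₂)
    (hOp : OpS (μ₀, lam₁) (μ₂, lam₂)) (hPd : PdS (ρ₀, η₁) (ρ₂, η₂))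
    -- deallocation: μ' = μ₂, λ' = λ₂ \ {l₀}
    (hμ' : μ' = μ₂) (hdealloc : lam' = fun l => if l = l₀ then none else lam₂ l)
    -- final pushdown state at nⱼ
    (hρ' : ρ' = ρ₂) (hη' : η' = η₂) :
    Corresponds G (μ₀, lam₁) (ρ₀, η₁) ∧
    Corresponds G (μ', lam') (ρ', η') :=
  soundness_bindvar_general G hGinj x l₀ v μ₀ lam₀ lam₁ μ₂ lam₂ μ' lam' ρ₀ ρ₂ ρ' η₀ η₁ η₂ η' OpS PdS
    hIH hcorr hGl₀ hbind hpbind hOp hPd hμ' hdealloc hρ' hη'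
end

section
/- (Soundness, procedure-call case.) Suppose correspondence is preserved by the rules generated by Φ([l/x₂]S, n_k, n_q, p', ∅) for the substituted body of the callee p' (induction hypothesis). Then correspondence is preserved by Φ((proc(in x₁, out x₂)S)(e, l), nᵢ, nⱼ, p, R), where l ∈ dom(μ) is a global location: the operational rule CALL allocates a fresh location l' for x₁ with value the evaluation of e and deallocates it on return, while the P-PROC rule pushes a new stack frame for p' with η(p')[x₁] := e and return point nⱼ, and the callee's exit rule pops the frame. If (μ₀,λ₀) with procedure p topmost corresponds to ⟨ρ₀,θ₀⟩, then the configuration at entry of the callee corresponds to the pushed pushdown state, and after return the final configuration (μ', λ') corresponds to the final pushdown state ⟨ρ',θ'⟩ at nⱼ; in particular the caller's local variables are unchanged across the call (dom(λ') = dom(λ₀) and λ'(l) = λ₀(l) for all l ∈ dom(λ'), matching η'(p) = η₀(p)). -/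
theorem Corresponds.push {G G' : Loc → Option Var} {μ lam : Loc → Option Val}
    {ρ : Loc → Val} {η η' : Var → Val} {l' : Loc} {x : Var} {v : Val}
    (h : Corresponds G (μ, lam) (ρ, η)) (hl' : G' l' = some x) (hx : η' x = v)
    (hdisj : ∀ l, (lam l).isSome → G' l = none) :
    Corresponds G' (μ, Function.update lam l' (some v)) (ρ, η') := by
  refine ⟨h.1, fun l y hs hG => ?_⟩
  by_cases hl : l = l'
  · subst hl
    obtain rfl : x = y := Option.some.inj (hl'.symm.trans hG)
    simp [hx]
  · simp only [Function.update_of_ne hl] at hs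
    simp [hdisj l hs] at hG

theorem pop_eq_of_frame {α β : Type*} [DecidableEq α] {lam₀ lam₂ : α → Option β} {l' : α}
    {v : β} (hfresh : lam₀ l' = none) (hframe : ∀ l, (lam₀ l).isSome → lam₂ l = lam₀ l)
    (hdom : ∀ l, (lam₂ l).isSome → (Function.update lam₀ l' (some v) l).isSome) :
    (fun l => if l = l' then none else lam₂ l) = lam₀ := by
  funext l
  split_ifs with hl
  · rw [hl, hfresh]
  · cases h₂ : lam₂ l with
    | none =>
      cases h₀ : lam₀ l with
      | none => rfl
      | some _ => simpa [h₂, h₀] using hframe l (by simp [h₀])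
    | some _ =>
      have h₀ := hdom l (by simp [h₂])
      rw [Function.update_of_ne hl] at h₀
      rw [← h₂, hframe l h₀]

theorem soundness_proc_general (Gp Gp' : Loc → Option Var)
    (x₁ : Var) (l' : Loc) (v : Val)
    (μ₀ lam₀ lam₁ μ₂ lam₂ μ' lam' : Loc → Option Val)
    (ρ₀ ρ₂ ρ' : Loc → Val) (η₀ η' ηc₁ ηc₂ : Var → Val)
    (OpBody : Cfg → Cfg → Prop) (PdBody : PdState → PdState → Prop)
    -- induction hypothesis for Φ([l/x₂]S, n_k, n_q, p', ∅)
    (hIH : Preserves Gp' OpBody PdBody)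
    -- the caller's configuration corresponds to the caller's pushdown state
    (hcorr : Corresponds Gp (μ₀, lam₀) (ρ₀, η₀))
    -- l' is fresh: l' ∉ dom(μ₀) and l' ∉ dom(λ₀)
    (hfreshlam : lam₀ l' = none)
    -- CALL: λ₁ = λ₀ ⊎ [l' := v], with (μ₀,λ₀,e) ⇓ v
    (hpush : lam₁ = Function.update lam₀ l' (some v))
    -- l' corresponds to the in-parameter x₁ of the callee p'
    (hGl' : Gp' l' = some x₁)
    -- the callee frame does not cover the caller's stack locations
    (hGp'Old : ∀ l, (lam₀ l).isSome → Gp' l = none)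
    -- P-PROC: the pushed frame satisfies η_k(p')[x₁ := e]
    (hηc₁ : ηc₁ x₁ = v)
    -- body executions: (μ₀,λ₁,[l/x₂]S) ⇓ (μ₂,λ₂) and (ρ₀,ηc₁) → (ρ₂,ηc₂)
    (hOp : OpBody (μ₀, lam₁) (μ₂, lam₂)) (hPd : PdBody (ρ₀, ηc₁) (ρ₂, ηc₂))
    -- the callee cannot modify the caller's local variables
    (hframe : ∀ l, (lam₀ l).isSome → lam₂ l = lam₀ l)
    -- the body introduces no stack locations beyond dom(λ₁)
    (hdom : ∀ l, (lam₂ l).isSome → (lam₁ l).isSome)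
    -- return: μ' = μ₂, λ' = λ₂ \ {l'}
    (hμ' : μ' = μ₂) (hpop : lam' = fun l => if l = l' then none else lam₂ l)
    -- the pop rule restores the caller's frame: final state (ρ₂, η₀) at nⱼ
    (hρ' : ρ' = ρ₂) (hη' : η' = η₀) :
    Corresponds Gp' (μ₀, lam₁) (ρ₀, ηc₁) ∧
    Corresponds Gp (μ', lam') (ρ', η') ∧
    (∀ l, (lam' l).isSome ↔ (lam₀ l).isSome) ∧
    (∀ l, (lam' l).isSome → lam' l = lam₀ l) := by
  subst hpush hμ' hpop hρ' hη'
  have hentry := hcorr.push hGl' hηc₁ hGp'Old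
  have hexit := hIH _ _ _ _ hentry hOp hPd
  rw [pop_eq_of_frame hfreshlam hframe hdom]
  exact ⟨hentry, ⟨hexit.1, hcorr.2⟩, fun _ => Iff.rfl, fun _ _ => rfl⟩

theorem soundness_proc (Gp Gp' : Loc → Option Var)
    (x₁ : Var) (l' : Loc) (v : Val)
    (μ₀ lam₀ lam₁ μ₂ lam₂ μ' lam' : Loc → Option Val)
    (ρ₀ ρ₂ ρ' : Loc → Val) (η₀ η' ηc₁ ηc₂ : Var → Val)
    (OpBody : Cfg → Cfg → Prop) (PdBody : PdState → PdState → Prop)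
    -- induction hypothesis for Φ([l/x₂]S, n_k, n_q, p', ∅)
    (hIH : Preserves Gp' OpBody PdBody)
    -- the caller's configuration corresponds to the caller's pushdown state
    (hcorr : Corresponds Gp (μ₀, lam₀) (ρ₀, η₀))
    -- l' is fresh: l' ∉ dom(μ₀) and l' ∉ dom(λ₀)
    (hfreshμ : μ₀ l' = none) (hfreshlam : lam₀ l' = none)
    -- CALL: λ₁ = λ₀ ⊎ [l' := v], with (μ₀,λ₀,e) ⇓ v
    (hpush : lam₁ = Function.update lam₀ l' (some v))
    -- l' corresponds to the in-parameter x₁ of the callee p'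
    (hGl' : Gp' l' = some x₁)
    -- the callee frame does not cover the caller's stack locations
    (hGp'Old : ∀ l, (lam₀ l).isSome → Gp' l = none)
    -- P-PROC: the pushed frame satisfies η_k(p')[x₁ := e]
    (hηc₁ : ηc₁ x₁ = v)
    -- body executions: (μ₀,λ₁,[l/x₂]S) ⇓ (μ₂,λ₂) and (ρ₀,ηc₁) → (ρ₂,ηc₂)
    (hOp : OpBody (μ₀, lam₁) (μ₂, lam₂)) (hPd : PdBody (ρ₀, ηc₁) (ρ₂, ηc₂))
    -- the callee cannot modify the caller's local variables
    (hframe : ∀ l, (lam₀ l).isSome → lam₂ l = lam₀ l)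
    -- the body introduces no stack locations beyond dom(λ₁)
    (hdom : ∀ l, (lam₂ l).isSome → (lam₁ l).isSome)
    -- return: μ' = μ₂, λ' = λ₂ \ {l'}
    (hμ' : μ' = μ₂) (hpop : lam' = fun l => if l = l' then none else lam₂ l)
    -- the pop rule restores the caller's frame: final state (ρ₂, η₀) at nⱼ
    (hρ' : ρ' = ρ₂) (hη' : η' = η₀) :
    Corresponds Gp' (μ₀, lam₁) (ρ₀, ηc₁) ∧
    Corresponds Gp (μ', lam') (ρ', η') ∧
    (∀ l, (lam' l).isSome ↔ (lam₀ l).isSome) ∧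
    (∀ l, (lam' l).isSome → lam' l = lam₀ l) :=
  soundness_proc_general Gp Gp' x₁ l' v μ₀ lam₀ lam₁ μ₂ lam₂ μ' lam' ρ₀ ρ₂ ρ' η₀ η' ηc₁ ηc₂ OpBody
    PdBody hIH hcorr hfreshlam hpush hGl' hGp'Old hηc₁ hOp hPd hframe hdom hμ' hpop hρ' hη'
end
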